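/- The store-delta widened transfer function is a complete abstraction of the timestamped widened transfer function: let ↦_ξ be any delta presentation of ↦, let D denote the delta-based transfer function built from ↦_ξ, and let T denote the timestamped transfer function built from ↦. Then for every initial context c₀ and every n ∈ ℕ, Dⁿ(({(c₀,0)}, {c₀}, ⊥, [⊥], 0)) = Tⁿ(({(c₀,0)}, {c₀}, ⊥, [⊥], 0)); in particular D is well defined (its result does not depend on the order in which the logs are concatenated). -/

import Mathlib

open Classical

/-- A store maps addresses to sets of values, ordered pointwise. -/
abbrev Store (Addr Value : Type*) := Addr → Set Value

/-- Replaying a store-delta log. -/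
def replay {Addr Value : Type*} (ξ : List (Addr × Set Value)) (σ : Store Addr Value) :
    Store Addr Value × Prop :=
  (fun a => σ a ∪ ⋃ vs ∈ {vs | (a, vs) ∈ ξ}, vs, ∃ p ∈ ξ, ¬ p.2 ⊆ σ p.1)

/-- The timestamped widened transfer function `T`, built from `↦`. -/
noncomputable def Tstep {Addr Value Context : Type*}
    (step : Context × Store Addr Value → Context × Store Addr Value → Prop)
    (cfg : Set (Context × ℕ) × Set Context × Store Addr Value × List (Store Addr Value) × ℕ) :
    Set (Context × ℕ) × Set Context × Store Addr Value × List (Store Addr Value) × ℕ :=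
  let Shat := cfg.1
  let F := cfg.2.1
  let σ := cfg.2.2.1
  let Sg := cfg.2.2.2.1
  let t := cfg.2.2.2.2
  let I : Set (Context × Store Addr Value) := {p | ∃ c ∈ F, step (c, σ) p}
  let σ' : Store Addr Value := fun a => σ a ∪ ⋃ p ∈ I, p.2 a
  let t' : ℕ := if σ' = σ then t else t + 1
  let Sg' : List (Store Addr Value) := if σ' = σ then Sg else σ' :: Sg
  let F' : Set Context := {c' | (∃ σc, (c', σc) ∈ I) ∧ (c', t') ∉ Shat}
  (Shat ∪ {p | p.1 ∈ F' ∧ p.2 = t'}, F', σ', Sg', t')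

/-- The delta-based widened transfer function `D`, built from a delta presentation
`↦_ξ`: the new store and the change flag are obtained by replaying (the concatenation,
in any order, of) all logs produced in the step, which by order-independence of `replay`
amounts to joining all logged entries into `σ` and checking whether any logged entry was
not already contained in `σ`. -/
noncomputable def Dstep {Addr Value Context : Type*}
    (dstep : Context × Store Addr Value → Context × List (Addr × Set Value) → Prop)
    (cfg : Set (Context × ℕ) × Set Context × Store Addr Value × List (Store Addr Value) × ℕ) :
    Set (Context × ℕ) × Set Context × Store Addr Value × List (Store Addr Value) × ℕ :=
  let Shat := cfg.1
  let F := cfg.2.1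
  let σ := cfg.2.2.1
  let Sg := cfg.2.2.2.1
  let t := cfg.2.2.2.2
  let I : Set (Context × List (Addr × Set Value)) := {p | ∃ c ∈ F, dstep (c, σ) p}
  let σ' : Store Addr Value := fun a => σ a ∪ ⋃ vs ∈ {vs | ∃ p ∈ I, (a, vs) ∈ p.2}, vs
  let changed : Prop := ∃ p ∈ I, ∃ q ∈ p.2, ¬ q.2 ⊆ σ q.1
  let t' : ℕ := if changed then t + 1 else t
  let Sg' : List (Store Addr Value) := if changed then σ' :: Sg else Sg
  let F' : Set Context := {c' | (∃ ξ, (c', ξ) ∈ I) ∧ (c', t') ∉ Shat}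
  (Shat ∪ {p | p.1 ∈ F' ∧ p.2 = t'}, F', σ', Sg', t')

/-! Soundness and completeness of the delta presentation say that the (successor, store)
pairs produced by `↦` from `σ` are exactly the replays on `σ` of the (successor, log) pairs
produced by `↦_ξ`. Joining all replayed stores into `σ` is the same as joining all logged
entries into `σ`, and that join differs from `σ` exactly when some logged entry is not
already contained in `σ`. Hence `D` and `T` agree on every configuration, not just along
the iterates from the initial one. -/

section DeltaPresentation

variable {Addr Value Context : Type*}

lemma join_logs_eq_join_replays (σ : Store Addr Value)
    (L : Set (Context × List (Addr × Set Value))) :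
    (fun a => σ a ∪ ⋃ vs ∈ {vs | ∃ p ∈ L, (a, vs) ∈ p.2}, vs) =
      fun a => σ a ∪ ⋃ p ∈ (fun p => (p.1, (replay p.2 σ).1)) '' L, p.2 a := by
  funext a
  rw [Set.biUnion_image]
  ext v
  simp only [replay, Set.mem_union, Set.mem_iUnion, exists_prop, Set.mem_ofPred_eq]
  constructor
  · rintro (hv | ⟨vs, ⟨p, hp, hmem⟩, hv⟩)
    · exact Or.inl hv
    · exact Or.inr ⟨p, hp, Or.inr ⟨vs, hmem, hv⟩⟩
  · rintro (hv | ⟨p, hp, hv | ⟨vs, hmem, hv⟩⟩)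
    · exact Or.inl hv
    · exact Or.inl hv
    · exact Or.inr ⟨vs, ⟨p, hp, hmem⟩, hv⟩

lemma exists_log_not_subset_iff (σ : Store Addr Value)
    (L : Set (Context × List (Addr × Set Value))) :
    (∃ p ∈ L, ∃ q ∈ p.2, ¬ q.2 ⊆ σ q.1) ↔
      ¬ (fun a => σ a ∪ ⋃ vs ∈ {vs | ∃ p ∈ L, (a, vs) ∈ p.2}, vs) = σ := by
  simp only [funext_iff, Set.union_eq_left, Set.iUnion₂_subset_iff, Set.mem_ofPred_eq,
    not_forall, exists_prop]
  constructor
  · rintro ⟨p, hp, ⟨a, vs⟩, hq, hns⟩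
    exact ⟨a, vs, ⟨p, hp, hq⟩, hns⟩
  · rintro ⟨a, vs, ⟨p, hp, hq⟩, hns⟩
    exact ⟨p, hp, (a, vs), hq, hns⟩

lemma exists_mem_image_replay_iff (σ : Store Addr Value)
    (L : Set (Context × List (Addr × Set Value))) (c' : Context) :
    (∃ σ', (c', σ') ∈ (fun p => (p.1, (replay p.2 σ).1)) '' L) ↔ ∃ ξ, (c', ξ) ∈ L := by
  constructor
  · rintro ⟨_, ⟨_, ξ⟩, hξ, ⟨⟩⟩
    exact ⟨ξ, hξ⟩
  · rintro ⟨ξ, hξ⟩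
    exact ⟨_, _, hξ, rfl⟩

variable {step : Context × Store Addr Value → Context × Store Addr Value → Prop}
  {dstep : Context × Store Addr Value → Context × List (Addr × Set Value) → Prop}

lemma successors_eq_image_replay
    (hsound : ∀ c σ c' ξ, dstep (c, σ) (c', ξ) → step (c, σ) (c', (replay ξ σ).1))
    (hcomplete : ∀ c σ c' σ', step (c, σ) (c', σ') →
      ∃ ξ, dstep (c, σ) (c', ξ) ∧ (replay ξ σ).1 = σ')
    (F : Set Context) (σ : Store Addr Value) :
    {p | ∃ c ∈ F, step (c, σ) p} =
      (fun p => (p.1, (replay p.2 σ).1)) '' {p | ∃ c ∈ F, dstep (c, σ) p} := by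
  ext ⟨c', σ'⟩
  constructor
  · rintro ⟨c, hc, hs⟩
    obtain ⟨ξ, hd, rfl⟩ := hcomplete _ _ _ _ hs
    exact ⟨(c', ξ), ⟨c, hc, hd⟩, rfl⟩
  · rintro ⟨⟨_, ξ⟩, ⟨c, hc, hd⟩, ⟨⟩⟩
    exact ⟨c, hc, hsound _ _ _ _ hd⟩

theorem Dstep_eq_Tstep
    (hsound : ∀ c σ c' ξ, dstep (c, σ) (c', ξ) → step (c, σ) (c', (replay ξ σ).1))
    (hcomplete : ∀ c σ c' σ', step (c, σ) (c', σ') →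
      ∃ ξ, dstep (c, σ) (c', ξ) ∧ (replay ξ σ).1 = σ') :
    Dstep dstep = Tstep step := by
  funext ⟨Shat, F, σ, Sg, t⟩
  simp only [Dstep, Tstep, successors_eq_image_replay hsound hcomplete,
    ← join_logs_eq_join_replays, exists_log_not_subset_iff, ite_not, exists_mem_image_replay_iff]

end DeltaPresentation

theorem stmt_7_general {Addr Value Context : Type*}
    (step : Context × Store Addr Value → Context × Store Addr Value → Prop)
    (dstep : Context × Store Addr Value → Context × List (Addr × Set Value) → Prop)
    (hsound : ∀ c σ c' ξ, dstep (c, σ) (c', ξ) → step (c, σ) (c', (replay ξ σ).1))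
    (hcomplete : ∀ c σ c' σ', step (c, σ) (c', σ') →
      ∃ ξ, dstep (c, σ) (c', ξ) ∧ (replay ξ σ).1 = σ')
    (c₀ : Context) :
    ∀ n : ℕ,
      (Dstep dstep)^[n] ({(c₀, 0)}, {c₀}, (fun _ => ∅), [fun _ => ∅], 0) =
        (Tstep step)^[n] ({(c₀, 0)}, {c₀}, (fun _ => ∅), [fun _ => ∅], 0) := by
  intro n
  rw [Dstep_eq_Tstep hsound hcomplete]

/-- The store-delta widened transfer function is a complete abstraction of
the timestamped widened transfer function: for any delta presentation `↦_ξ` of `↦`,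
every iterate of `D` from the initial configuration equals the corresponding iterate of
`T`. -/
theorem stmt_7 {Addr Value Context : Type*}
    (step : Context × Store Addr Value → Context × Store Addr Value → Prop)
    (hext : ∀ c σ c' σ', step (c, σ) (c', σ') → σ ≤ σ')
    (dstep : Context × Store Addr Value → Context × List (Addr × Set Value) → Prop)
    (hsound : ∀ c σ c' ξ, dstep (c, σ) (c', ξ) → step (c, σ) (c', (replay ξ σ).1))
    (hcomplete : ∀ c σ c' σ', step (c, σ) (c', σ') →
      ∃ ξ, dstep (c, σ) (c', ξ) ∧ (replay ξ σ).1 = σ')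
    (c₀ : Context) :
    ∀ n : ℕ,
      (Dstep dstep)^[n] ({(c₀, 0)}, {c₀}, (fun _ => ∅), [fun _ => ∅], 0) =
        (Tstep step)^[n] ({(c₀, 0)}, {c₀}, (fun _ => ∅), [fun _ => ∅], 0) :=
  stmt_7_general step dstep hsound hcomplete c₀
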